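/- Let f : I ⊆ (0,∞) → (0,∞) be differentiable on I°, let a, b ∈ I° with a < b, f' integrable on [a,b], and suppose |f'|^q is s-geometrically convex on [a,b] for some q > 1 and s ∈ (0,1]. If |f'(a)| ≤ 1 and |f'(b)| ≤ 1, then |f(√(ab)) − (1/(ln b − ln a)) ∫_a^b f(x)/x dx| ≤ (1/4) ln(b/a) · ((q−1)/(2q−1))^{1−1/q} · [ a|f'(a)|^s g₂(θ₃)^{1/q} + b|f'(b)|^s g₂(θ₄)^{1/q} ]. -/

import Mathlib

/-!
Substituting `x = a^(1-t) b^t` turns the left-hand side into `|G(1/2) - ∫₀¹ G|` for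
`G t = f (a^(1-t) b^t)`, and integrating by parts on both halves of `[0, 1]` writes this as
`∫₀^{1/2} t G'(t) dt - ∫₀^{1/2} t G'(1-t) dt`. Because `|f'| ≤ 1` at the endpoints and
`t^s ≥ s t`, the `s`-geometric convexity of `|f'|^q` gives `|G'(t)| ≤ ln(b/a) A^(1-t) B^t` with
`A = a|f'(a)|^s`, `B = b|f'(b)|^s`. Hölder's inequality with exponents `q/(q-1)` and `q` on
`[0, 1/2]` bounds each integral, and `∫₀^{1/2} (A^(1-t) B^t)^q dt = A^q g₂(θ₃) / 2`.
-/

open Real MeasureTheory Set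

/-- `g` is `s`-geometrically convex on `J`. -/
def SGeometricallyConvexOn (s : ℝ) (J : Set ℝ) (g : ℝ → ℝ) : Prop :=
  ∀ x ∈ J, ∀ y ∈ J, ∀ t ∈ Set.Icc (0:ℝ) 1,
    g (x ^ t * y ^ (1 - t)) ≤ g x ^ t ^ s * g y ^ (1 - t) ^ s

noncomputable def g₁ (u : ℝ) : ℝ :=
  if u = 1 then 1/2 else (u * Real.log u - u + 1) / (Real.log u) ^ 2

noncomputable def g₂ (u : ℝ) : ℝ :=
  if u = 1 then 1 else (u - 1) / Real.log u

lemma g₂_nonneg {u : ℝ} (hu : 0 ≤ u) : 0 ≤ g₂ u := by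
  unfold g₂
  split_ifs with h1
  · exact zero_le_one
  rcases lt_or_gt_of_ne h1 with hlt | hgt
  · exact div_nonneg_of_nonpos (by linarith) (log_nonpos hu hlt.le)
  · exact div_nonneg (by linarith) (log_nonneg hgt.le)

lemma g₂_zero : g₂ 0 = 0 := by
  simp [g₂]

lemma integral_exp_mul_zero_half (K : ℝ) :
    ∫ t in (0:ℝ)..1/2, exp (K * t) = g₂ (exp (K / 2)) / 2 := by
  rcases eq_or_ne K 0 with rfl | hK
  · simp [g₂]
  have hexp : exp (K / 2) ≠ 1 := by
    rw [Ne, exp_eq_one_iff]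
    exact div_ne_zero hK two_ne_zero
  rw [intervalIntegral.integral_comp_mul_left (fun x => exp x) hK, integral_exp, g₂,
    if_neg hexp, log_exp, mul_zero, exp_zero, smul_eq_mul]
  field_simp

noncomputable def geomInterp (a b t : ℝ) : ℝ := a ^ (1 - t) * b ^ t

section geomInterp

variable {a b t : ℝ}

@[simp] lemma geomInterp_zero (a b : ℝ) : geomInterp a b 0 = a := by
  simp [geomInterp]

@[simp] lemma geomInterp_one (a b : ℝ) : geomInterp a b 1 = b := by
  simp [geomInterp]

lemma geomInterp_one_sub (a b t : ℝ) : geomInterp a b (1 - t) = geomInterp b a t := by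
  simp [geomInterp, mul_comm]

lemma geomInterp_half (ha : 0 ≤ a) (hb : 0 ≤ b) : geomInterp a b (1 / 2) = √(a * b) := by
  rw [geomInterp, sqrt_eq_rpow, mul_rpow ha hb]
  norm_num

lemma geomInterp_nonneg (ha : 0 ≤ a) (hb : 0 ≤ b) : 0 ≤ geomInterp a b t :=
  mul_nonneg (rpow_nonneg ha _) (rpow_nonneg hb _)

lemma geomInterp_eq_exp (ha : 0 < a) (hb : 0 < b) :
    geomInterp a b t = exp (log a + t * (log b - log a)) := by
  rw [geomInterp, rpow_def_of_pos ha, rpow_def_of_pos hb, ← exp_add]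
  ring_nf

lemma geomInterp_mul (ha : 0 ≤ a) (hb : 0 ≤ b) {c d : ℝ} (hc : 0 ≤ c) (hd : 0 ≤ d) :
    geomInterp (a * c) (b * d) t = geomInterp a b t * geomInterp c d t := by
  simp only [geomInterp, mul_rpow ha hc, mul_rpow hb hd]
  ring

lemma geomInterp_le (ha : 0 ≤ a) (hb : 0 ≤ b) (ht : t ∈ Icc (0:ℝ) 1) :
    geomInterp a b t ≤ (1 - t) * a + t * b :=
  geom_mean_le_arith_mean2_weighted (by linarith [ht.2]) ht.1 ha hb (by ring)

lemma geomInterp_mem_Icc (ha : 0 < a) (hab : a ≤ b) (ht : t ∈ Icc (0:ℝ) 1) :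
    geomInterp a b t ∈ Icc a b := by
  have h1t : 0 ≤ 1 - t := by linarith [ht.2]
  constructor
  · calc a = a ^ (1 - t) * a ^ t := by rw [← rpow_add ha]; simp
      _ ≤ geomInterp a b t := by
        unfold geomInterp
        gcongr
        exact ht.1
  · calc geomInterp a b t ≤ b ^ (1 - t) * b ^ t := by
          unfold geomInterp
          gcongr
          exact rpow_nonneg (ha.le.trans hab) _
      _ = b := by rw [← rpow_add (ha.trans_le hab)]; simp

lemma hasDerivAt_geomInterp (ha : 0 < a) (hb : 0 < b) (t : ℝ) :
    HasDerivAt (geomInterp a b) ((log b - log a) * geomInterp a b t) t := by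
  have hexp : geomInterp a b = fun t => exp (log a + t * (log b - log a)) :=
    funext fun _ => geomInterp_eq_exp ha hb
  rw [hexp, mul_comm]
  exact (((hasDerivAt_id t).mul_const _).const_add _).exp.congr_deriv (by simp)

lemma continuous_geomInterp (ha : 0 < a) (hb : 0 < b) : Continuous (geomInterp a b) :=
  continuous_iff_continuousAt.2 fun t => (hasDerivAt_geomInterp ha hb t).continuousAt

lemma measurable_geomInterp (a b : ℝ) : Measurable (geomInterp a b) := by
  unfold geomInterp
  fun_prop

end geomInterp

lemma integral_geomInterp_rpow_zero_half {A B q : ℝ} (hA : 0 ≤ A) (hB : 0 ≤ B) (hq : 0 < q) :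
    ∫ t in (0:ℝ)..1/2, geomInterp A B t ^ q = A ^ q * g₂ ((B / A) ^ (q / 2)) / 2 := by
  -- If `A = 0` or `B = 0`, the integrand vanishes on `(0, 1/2]` and so does the right side
  -- (through `0 ^ q = 0`, resp. `0 / A = 0` and `g₂ 0 = 0`).
  rcases hA.lt_or_eq with hA | rfl
  · rcases hB.lt_or_eq with hB | rfl
    · have hexp : ∀ t, geomInterp A B t ^ q = A ^ q * exp (q * log (B / A) * t) := by
        intro t
        rw [geomInterp_eq_exp hA hB, ← exp_mul, ← log_div hB.ne' hA.ne', rpow_def_of_pos hA,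
          ← exp_add]
        ring_nf
      simp_rw [hexp, intervalIntegral.integral_const_mul, integral_exp_mul_zero_half,
        rpow_def_of_pos (div_pos hB hA)]
      ring_nf
    · have hzero : ∀ t ∈ uIoc (0:ℝ) (1/2), geomInterp A 0 t ^ q = 0 := by
        intro t ht
        rw [uIoc_of_le (by norm_num)] at ht
        rw [geomInterp, zero_rpow ht.1.ne', mul_zero, zero_rpow hq.ne']
      rw [intervalIntegral.integral_congr_ae (Filter.Eventually.of_forall hzero)]
      simp [zero_rpow (half_pos hq).ne', g₂_zero]
  · have hzero : ∀ t ∈ uIoc (0:ℝ) (1/2), geomInterp 0 B t ^ q = 0 := by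
      intro t ht
      rw [uIoc_of_le (by norm_num)] at ht
      rw [geomInterp, zero_rpow (by linarith [ht.2]), zero_mul, zero_rpow hq.ne']
    rw [intervalIntegral.integral_congr_ae (Filter.Eventually.of_forall hzero)]
    simp [zero_rpow hq.ne']

lemma abs_integral_mul_le_of_rpow_le {α : Type*} [MeasurableSpace α] {μ : Measure α}
    {p q : ℝ} (hpq : p.HolderConjugate q) {w g h : α → ℝ} (hw : MemLp w (ENNReal.ofReal p) μ)
    (hg : AEStronglyMeasurable g μ) (hgh : ∀ᵐ x ∂μ, |g x| ^ q ≤ h x) (hh : Integrable h μ) :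
    |∫ x, w x * g x ∂μ| ≤ (∫ x, |w x| ^ p ∂μ) ^ (1 / p) * (∫ x, h x ∂μ) ^ (1 / q) := by
  have hq0 : 0 < q := hpq.symm.pos
  have hgq : Integrable (fun x => ‖g x‖ ^ q) μ := by
    refine hh.mono' (hg.norm.aemeasurable.pow_const q).aestronglyMeasurable ?_
    filter_upwards [hgh] with x hx
    rwa [norm_eq_abs, norm_eq_abs, abs_of_nonneg (rpow_nonneg (abs_nonneg _) _)]
  have hgLq : MemLp g (ENNReal.ofReal q) μ :=
    (integrable_norm_rpow_iff hg (by simpa using hq0) ENNReal.ofReal_ne_top).1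
      (by rwa [ENNReal.toReal_ofReal hq0.le])
  calc |∫ x, w x * g x ∂μ| ≤ ∫ x, |w x| * |g x| ∂μ := by
        simpa only [abs_mul] using abs_integral_le_integral_abs (f := fun x => w x * g x)
    _ ≤ (∫ x, |w x| ^ p ∂μ) ^ (1 / p) * (∫ x, |g x| ^ q ∂μ) ^ (1 / q) :=
        integral_mul_le_Lp_mul_Lq_of_nonneg hpq (.of_forall fun _ => abs_nonneg _)
          (.of_forall fun _ => abs_nonneg _) hw.abs hgLq.abs
    _ ≤ (∫ x, |w x| ^ p ∂μ) ^ (1 / p) * (∫ x, h x ∂μ) ^ (1 / q) := by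
        have hint_le : ∫ x, |g x| ^ q ∂μ ≤ ∫ x, h x ∂μ :=
          integral_mono_ae (by simpa using hgq) hh hgh
        have hint_nonneg : 0 ≤ ∫ x, |g x| ^ q ∂μ :=
          integral_nonneg fun x => rpow_nonneg (abs_nonneg (g x)) q
        gcongr

lemma integrableOn_geomInterp_rpow {A B q : ℝ} (hA : 0 ≤ A) (hB : 0 ≤ B) (hq : 0 ≤ q) :
    IntegrableOn (fun t => geomInterp A B t ^ q) (Icc 0 1) := by
  refine Measure.integrableOn_of_bounded (M := (A + B) ^ q) measure_Icc_lt_top.ne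
    ((measurable_geomInterp A B).pow_const q).aestronglyMeasurable
    ((ae_restrict_iff' measurableSet_Icc).2 (.of_forall fun t ht => ?_))
  have h0 := geomInterp_nonneg (t := t) hA hB
  have hle : geomInterp A B t ≤ A + B := by
    nlinarith [geomInterp_le hA hB ht, ht.1, ht.2]
  rw [norm_eq_abs, abs_of_nonneg (rpow_nonneg h0 q)]
  exact rpow_le_rpow h0 hle hq

lemma half_rpow_div_mul_half_rpow_of_holderConjugate {p q : ℝ} (hpq : p.HolderConjugate q) :
    ((1 / 2 : ℝ) ^ (p + 1) / (p + 1)) ^ (1 / p) * (1 / 2) ^ (1 / q)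
      = 1 / 4 * (1 / (p + 1)) ^ (1 / p) := by
  have hp := hpq.pos
  have hsum : (p + 1) * (1 / p) + 1 / q = 2 := by
    have := hpq.one_div_add_one_div
    field_simp at this ⊢
    linarith
  rw [div_eq_mul_one_div ((1 / 2 : ℝ) ^ (p + 1)), mul_rpow (by positivity) (by positivity),
    ← rpow_mul (by norm_num), mul_right_comm, ← rpow_add (by norm_num), hsum]
  norm_num

lemma setIntegral_abs_rpow_Ioc_zero_half {p : ℝ} (hp : 0 < p) :
    ∫ t in Ioc (0:ℝ) (1 / 2), |t| ^ p = (1 / 2) ^ (p + 1) / (p + 1) := by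
  rw [setIntegral_congr_fun measurableSet_Ioc fun t ht => by rw [abs_of_pos ht.1],
    ← intervalIntegral.integral_of_le (by norm_num), integral_rpow (by left; linarith),
    zero_rpow (by linarith)]
  ring

lemma abs_integral_mul_le_geomInterp {q L A B : ℝ} (hq : 1 < q) (hL : 0 ≤ L) (hA : 0 ≤ A)
    (hB : 0 ≤ B) {ψ : ℝ → ℝ} (hψm : AEStronglyMeasurable ψ (volume.restrict (Ioc 0 (1 / 2))))
    (hψ : ∀ t ∈ Ioc (0:ℝ) (1 / 2), |ψ t| ≤ L * geomInterp A B t) :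
    |∫ t in (0:ℝ)..1/2, t * ψ t|
      ≤ 1 / 4 * L * ((q - 1) / (2 * q - 1)) ^ (1 - 1 / q) *
          (A * g₂ ((B / A) ^ (q / 2)) ^ (1 / q)) := by
  have hq0 : 0 < q := by linarith
  set p := q / (q - 1) with hp
  have hpq : p.HolderConjugate q := (HolderConjugate.conjExponent hq).symm
  have hsub : Ioc (0:ℝ) (1 / 2) ⊆ Icc 0 1 := fun t ht => ⟨ht.1.le, by linarith [ht.2]⟩
  have hw : MemLp (fun t => t) (ENNReal.ofReal p) (volume.restrict (Ioc (0:ℝ) (1 / 2))) := by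
    refine MemLp.of_bound aestronglyMeasurable_id (1 / 2)
      ((ae_restrict_iff' measurableSet_Ioc).2 (.of_forall fun t ht => ?_))
    rw [norm_eq_abs, abs_of_pos ht.1]
    exact ht.2
  have hgh : ∀ᵐ t ∂(volume.restrict (Ioc (0:ℝ) (1 / 2))),
      |ψ t| ^ q ≤ L ^ q * geomInterp A B t ^ q := by
    refine (ae_restrict_iff' measurableSet_Ioc).2 (.of_forall fun t ht => ?_)
    rw [← mul_rpow hL (geomInterp_nonneg hA hB)]
    exact rpow_le_rpow (abs_nonneg _) (hψ t ht) hq0.le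
  have hh := ((integrableOn_geomInterp_rpow hA hB hq0.le).mono_set hsub).const_mul (L ^ q)
  have hhq : ∫ t in Ioc (0:ℝ) (1 / 2), L ^ q * geomInterp A B t ^ q
      = L ^ q * (A ^ q * (g₂ ((B / A) ^ (q / 2)) * (1 / 2))) := by
    rw [integral_const_mul, ← intervalIntegral.integral_of_le (by norm_num),
      integral_geomInterp_rpow_zero_half hA hB hq0]
    ring
  have hG := g₂_nonneg (rpow_nonneg (div_nonneg hB hA) (q / 2))
  have hpinv : 1 / p = 1 - 1 / q := by rw [hp]; field_simp
  have hp1 : 1 / (p + 1) = (q - 1) / (2 * q - 1) := by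
    rw [hp, div_add_one (by linarith : q - 1 ≠ 0), one_div_div]
    ring_nf
  rw [intervalIntegral.integral_of_le (by norm_num)]
  refine (abs_integral_mul_le_of_rpow_le hpq hw hψm hgh hh).trans_eq ?_
  rw [setIntegral_abs_rpow_Ioc_zero_half hpq.pos, hhq, mul_rpow (by positivity) (by positivity),
    mul_rpow (by positivity) (by positivity), mul_rpow hG (by norm_num), ← rpow_mul hL,
    ← rpow_mul hA, mul_one_div_cancel hq0.ne', rpow_one, rpow_one]
  calc _ = (((1 / 2 : ℝ) ^ (p + 1) / (p + 1)) ^ (1 / p) * (1 / 2) ^ (1 / q))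
        * L * (A * g₂ ((B / A) ^ (q / 2)) ^ (1 / q)) := by ring
    _ = _ := by rw [half_rpow_div_mul_half_rpow_of_holderConjugate hpq, hp1, hpinv]; ring

lemma integral_id_mul_deriv {G G' : ℝ → ℝ} {c : ℝ} (hG : ∀ t ∈ uIcc 0 c, HasDerivAt G (G' t) t)
    (hG' : IntervalIntegrable G' volume 0 c) :
    ∫ t in (0:ℝ)..c, t * G' t = c * G c - ∫ t in (0:ℝ)..c, G t := by
  simpa using intervalIntegral.integral_mul_deriv_eq_deriv_mul (u := id) (u' := fun _ => 1)
    (fun t _ => hasDerivAt_id t) hG intervalIntegrable_const hG'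

lemma sub_integral_eq_integral_mul_deriv {G G' : ℝ → ℝ}
    (hG : ∀ t ∈ Icc (0:ℝ) 1, HasDerivAt G (G' t) t) (hG' : IntervalIntegrable G' volume 0 1) :
    G (1 / 2) - ∫ t in (0:ℝ)..1, G t
      = (∫ t in (0:ℝ)..1/2, t * G' t) - ∫ t in (0:ℝ)..1/2, t * G' (1 - t) := by
  have hsub : uIcc (0:ℝ) (1 / 2) ⊆ Icc 0 1 := by
    rw [uIcc_of_le (by norm_num)]
    exact Icc_subset_Icc_right (by norm_num)
  have hGc : ContinuousOn G (Icc 0 1) := fun t ht => (hG t ht).continuousAt.continuousWithinAt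
  have hGint : ∀ c d, uIcc c d ⊆ Icc (0:ℝ) 1 → IntervalIntegrable G volume c d :=
    fun c d h => (hGc.mono h).intervalIntegrable
  have hleft := integral_id_mul_deriv (c := 1 / 2) (fun t ht => hG t (hsub ht))
    (hG'.mono_set (by rwa [uIcc_of_le zero_le_one]))
  have hright := integral_id_mul_deriv (G := fun t => G (1 - t)) (G' := fun t => -G' (1 - t))
    (c := 1 / 2)
    (fun t ht => HasDerivAt.comp_const_sub 1 t
      (hG (1 - t) ⟨by linarith [(hsub ht).2], by linarith [(hsub ht).1]⟩))
    ((hG'.comp_sub_left 1).symm.mono_set (by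
      rw [sub_self, sub_zero]
      exact uIcc_subset_uIcc left_mem_uIcc (by rw [uIcc_of_le zero_le_one]; norm_num))).neg
  have hreflect : ∫ t in (0:ℝ)..1/2, G (1 - t) = ∫ t in (1/2:ℝ)..1, G t := by
    rw [intervalIntegral.integral_comp_sub_left G 1]
    norm_num
  have hsub' : uIcc (1 / 2 : ℝ) 1 ⊆ Icc 0 1 := by
    rw [uIcc_of_le (by norm_num)]
    exact Icc_subset_Icc_left (by norm_num)
  rw [← intervalIntegral.integral_add_adjacent_intervals (hGint _ _ hsub) (hGint _ _ hsub')]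
  simp only [mul_neg, intervalIntegral.integral_neg] at hright
  rw [hleft, ← neg_neg (∫ t in (0:ℝ)..1/2, t * G' (1 - t)), hright, hreflect]
  norm_num
  ring

lemma integral_div_eq_mul_integral_geomInterp {a b : ℝ} (ha : 0 < a) (hab : a ≤ b) {g : ℝ → ℝ}
    (hg : ContinuousOn g (Icc a b)) :
    ∫ x in a..b, g x / x = (log b - log a) * ∫ t in (0:ℝ)..1, g (geomInterp a b t) := by
  have hb := ha.trans_le hab
  have hmaps : geomInterp a b '' uIcc 0 1 ⊆ Icc a b := by
    rw [uIcc_of_le zero_le_one]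
    rintro _ ⟨t, ht, rfl⟩
    exact geomInterp_mem_Icc ha hab ht
  have hcv := intervalIntegral.integral_comp_mul_deriv'' (g := fun x => g x / x)
    (continuous_geomInterp ha hb).continuousOn
    (fun t _ => (hasDerivAt_geomInterp ha hb t).hasDerivWithinAt)
    ((continuous_const.mul (continuous_geomInterp ha hb)).continuousOn)
    ((hg.div continuousOn_id fun x hx => (ha.trans_le hx.1).ne').mono hmaps)
  rw [geomInterp_zero, geomInterp_one] at hcv
  rw [← hcv, ← intervalIntegral.integral_const_mul]
  refine intervalIntegral.integral_congr fun t _ => ?_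
  have := (geomInterp_eq_exp ha hb (t := t)).symm ▸ exp_pos _
  simp only [Function.comp_apply]
  field_simp

lemma rpow_rpow_le_rpow_mul_rpow {c q s u : ℝ} (hc0 : 0 ≤ c) (hc1 : c ≤ 1) (hq : 0 ≤ q)
    (hs : s ∈ Ioc (0:ℝ) 1) (hu : u ∈ Icc (0:ℝ) 1) :
    (c ^ q) ^ u ^ s ≤ (c ^ (s * u)) ^ q := by
  have hsu : s * u ≤ u ^ s := by
    have h1 : u ^ (1:ℝ) ≤ u ^ s := rpow_le_rpow_of_exponent_ge' hu.1 hu.2 hs.1.le hs.2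
    rw [rpow_one] at h1
    nlinarith [hs.2, hu.1]
  calc (c ^ q) ^ u ^ s ≤ (c ^ q) ^ (s * u) :=
        rpow_le_rpow_of_exponent_ge' (rpow_nonneg hc0 q) (rpow_le_one hc0 hc1 hq)
          (mul_nonneg hs.1.le hu.1) hsu
    _ = (c ^ (s * u)) ^ q := by rw [← rpow_mul hc0, ← rpow_mul hc0, mul_comm]

lemma SGeometricallyConvexOn.le_rpow_mul_rpow {s q : ℝ} {J : Set ℝ} {g : ℝ → ℝ}
    (hconv : SGeometricallyConvexOn s J fun x => g x ^ q) (hs : s ∈ Ioc (0:ℝ) 1) (hq : 0 < q)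
    (hg : ∀ x, 0 ≤ g x) {x y t : ℝ} (hx : x ∈ J) (hy : y ∈ J) (hgx : g x ≤ 1) (hgy : g y ≤ 1)
    (ht : t ∈ Icc (0:ℝ) 1) :
    g (x ^ t * y ^ (1 - t)) ≤ g x ^ (s * t) * g y ^ (s * (1 - t)) := by
  have h1t : 1 - t ∈ Icc (0:ℝ) 1 := ⟨by linarith [ht.2], by linarith [ht.1]⟩
  have hx0 := rpow_nonneg (hg x) (s * t)
  have hy0 := rpow_nonneg (hg y) (s * (1 - t))
  rw [← rpow_le_rpow_iff (hg _) (mul_nonneg hx0 hy0) hq, mul_rpow hx0 hy0]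
  exact (hconv x hx y hy t ht).trans (mul_le_mul
    (rpow_rpow_le_rpow_mul_rpow (hg x) hgx hq.le hs ht)
    (rpow_rpow_le_rpow_mul_rpow (hg y) hgy hq.le hs h1t)
    (rpow_nonneg (rpow_nonneg (hg y) q) _) (rpow_nonneg hx0 q))

lemma geomInterp_mul_abs_le_of_sGeometricallyConvexOn {s q a b t : ℝ} {h : ℝ → ℝ}
    (hconv : SGeometricallyConvexOn s (Icc a b) fun x => |h x| ^ q) (hs : s ∈ Ioc (0:ℝ) 1)
    (hq : 0 < q) (ha : 0 < a) (hab : a ≤ b) (hha : |h a| ≤ 1) (hhb : |h b| ≤ 1)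
    (ht : t ∈ Icc (0:ℝ) 1) :
    geomInterp a b t * |h (geomInterp a b t)| ≤ geomInterp (a * |h a| ^ s) (b * |h b| ^ s) t := by
  have hb := ha.trans_le hab
  have hbound := hconv.le_rpow_mul_rpow (g := fun x => |h x|) hs hq (fun _ => abs_nonneg _)
    (right_mem_Icc.2 hab) (left_mem_Icc.2 hab) hhb hha ht
  rw [geomInterp_mul ha.le hb.le (rpow_nonneg (abs_nonneg _) _) (rpow_nonneg (abs_nonneg _) _)]
  refine mul_le_mul_of_nonneg_left ?_ (geomInterp_nonneg ha.le hb.le)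
  simpa only [geomInterp, mul_comm, ← rpow_mul (abs_nonneg _)] using hbound

lemma abs_sub_integral_le_of_abs_deriv_le_geomInterp {G G' : ℝ → ℝ} {q L A B : ℝ} (hq : 1 < q)
    (hL : 0 ≤ L) (hA : 0 ≤ A) (hB : 0 ≤ B) (hG : ∀ t ∈ Icc (0:ℝ) 1, HasDerivAt G (G' t) t)
    (hG'm : Measurable G') (hG' : ∀ t ∈ Icc (0:ℝ) 1, |G' t| ≤ L * geomInterp A B t) :
    |G (1 / 2) - ∫ t in (0:ℝ)..1, G t|
      ≤ 1 / 4 * L * ((q - 1) / (2 * q - 1)) ^ (1 - 1 / q) *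
          (A * g₂ ((B / A) ^ (q / 2)) ^ (1 / q) + B * g₂ ((A / B) ^ (q / 2)) ^ (1 / q)) := by
  have hG'int : IntervalIntegrable G' volume 0 1 := by
    rw [intervalIntegrable_iff_integrableOn_Icc_of_le zero_le_one]
    refine Integrable.mono' ((integrableOn_geomInterp_rpow hA hB zero_le_one).const_mul L)
      hG'm.aestronglyMeasurable
      ((ae_restrict_iff' measurableSet_Icc).2 (.of_forall fun t ht => ?_))
    simpa using hG' t ht
  have hsub : Ioc (0:ℝ) (1 / 2) ⊆ Icc 0 1 := fun t ht => ⟨ht.1.le, by linarith [ht.2]⟩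
  have hleft := abs_integral_mul_le_geomInterp hq hL hA hB hG'm.aestronglyMeasurable
    fun t ht => hG' t (hsub ht)
  have hright := abs_integral_mul_le_geomInterp (ψ := fun t => G' (1 - t)) hq hL hB hA
    (hG'm.comp (measurable_const.sub measurable_id)).aestronglyMeasurable
    fun t ht => by
      rw [← geomInterp_one_sub]
      exact hG' (1 - t) ⟨by linarith [(hsub ht).2], by linarith [(hsub ht).1]⟩
  rw [sub_integral_eq_integral_mul_deriv hG hG'int, mul_add]
  exact (abs_sub _ _).trans (add_le_add hleft hright)

theorem stmt_14_general
    (I : Set ℝ) (hI : I.OrdConnected) (hIpos : I ⊆ Set.Ioi (0:ℝ))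
    (f f' : ℝ → ℝ)
    (a b : ℝ) (ha : a ∈ interior I) (hb : b ∈ interior I) (hab : a < b)
    (hdiff : ∀ x ∈ interior I, HasDerivAt f (f' x) x)
    (q s : ℝ) (hq : 1 < q) (hs : s ∈ Set.Ioc (0:ℝ) 1)
    (hconv : SGeometricallyConvexOn s (Set.Icc a b) (fun x => |f' x| ^ q))
    (hfa : |f' a| ≤ 1) (hfb : |f' b| ≤ 1) :
    |f (Real.sqrt (a * b)) - (1 / (Real.log b - Real.log a)) * ∫ x in a..b, f x / x| ≤
      (1 / 4 : ℝ) * Real.log (b / a) * ((q - 1) / (2 * q - 1)) ^ (1 - 1 / q) *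
        (a * |f' a| ^ s * (g₂ ((b * |f' b| ^ s / (a * |f' a| ^ s)) ^ (q / 2))) ^ (1 / q)
         + b * |f' b| ^ s * (g₂ ((a * |f' a| ^ s / (b * |f' b| ^ s)) ^ (q / 2))) ^ (1 / q)) := by
  have ha0 : 0 < a := hIpos (interior_subset ha)
  have hb0 : 0 < b := hIpos (interior_subset hb)
  have hderiv : ∀ x ∈ Icc a b, HasDerivAt f (f' x) x :=
    fun x hx => hdiff x (hI.interior.out ha hb hx)
  have hL : 0 < log b - log a := sub_pos.2 (log_lt_log ha0 hab)
  have hmem := fun t (ht : t ∈ Icc (0:ℝ) 1) => geomInterp_mem_Icc ha0 hab.le ht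
  -- `deriv f` rather than `f'` makes the derivative measurable.
  set ψ := fun t => deriv f (geomInterp a b t) * ((log b - log a) * geomInterp a b t)
  have hψm : Measurable ψ := ((measurable_deriv f).comp (measurable_geomInterp a b)).mul
    (measurable_const.mul (measurable_geomInterp a b))
  have hψderiv : ∀ t ∈ Icc (0:ℝ) 1, HasDerivAt (fun t => f (geomInterp a b t)) (ψ t) t :=
    fun t ht => (hderiv _ (hmem t ht)).differentiableAt.hasDerivAt.comp t
      (hasDerivAt_geomInterp ha0 hb0 t)
  have hψ : ∀ t ∈ Icc (0:ℝ) 1,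
      |ψ t| ≤ (log b - log a) * geomInterp (a * |f' a| ^ s) (b * |f' b| ^ s) t := by
    intro t ht
    rw [abs_mul, abs_of_nonneg (mul_nonneg hL.le (geomInterp_nonneg ha0.le hb0.le)),
      (hderiv _ (hmem t ht)).deriv, mul_comm, mul_assoc]
    exact mul_le_mul_of_nonneg_left (geomInterp_mul_abs_le_of_sGeometricallyConvexOn hconv hs
      (by linarith) ha0 hab.le hfa hfb ht) hL.le
  have hcv := integral_div_eq_mul_integral_geomInterp ha0 hab.le
    fun x hx => (hderiv x hx).continuousAt.continuousWithinAt
  rw [hcv, one_div, inv_mul_cancel_left₀ hL.ne', ← geomInterp_half ha0.le hb0.le,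
    log_div hb0.ne' ha0.ne']
  exact abs_sub_integral_le_of_abs_deriv_le_geomInterp hq hL.le (by positivity) (by positivity)
    hψderiv hψm hψ

theorem stmt_14
    (I : Set ℝ) (hI : I.OrdConnected) (hIpos : I ⊆ Set.Ioi (0:ℝ))
    (f f' : ℝ → ℝ) (hfpos : ∀ x ∈ I, 0 < f x)
    (a b : ℝ) (ha : a ∈ interior I) (hb : b ∈ interior I) (hab : a < b)
    (hdiff : ∀ x ∈ interior I, HasDerivAt f (f' x) x)
    (hint : IntervalIntegrable f' volume a b)
    (q s : ℝ) (hq : 1 < q) (hs : s ∈ Set.Ioc (0:ℝ) 1)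
    (hconv : SGeometricallyConvexOn s (Set.Icc a b) (fun x => |f' x| ^ q))
    (hfa : |f' a| ≤ 1) (hfb : |f' b| ≤ 1) :
    |f (Real.sqrt (a * b)) - (1 / (Real.log b - Real.log a)) * ∫ x in a..b, f x / x| ≤
      (1 / 4 : ℝ) * Real.log (b / a) * ((q - 1) / (2 * q - 1)) ^ (1 - 1 / q) *
        (a * |f' a| ^ s * (g₂ ((b * |f' b| ^ s / (a * |f' a| ^ s)) ^ (q / 2))) ^ (1 / q)
         + b * |f' b| ^ s * (g₂ ((a * |f' a| ^ s / (b * |f' b| ^ s)) ^ (q / 2))) ^ (1 / q)) :=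
  stmt_14_general I hI hIpos f f' a b ha hb hab hdiff q s hq hs hconv hfa hfb
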